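/- arXiv:1210.3513 — 2 statements merged into one kernel-verified Lean document; each statement's English description precedes it below -/
import Mathlib

section
/- If f : ℝ → ℝ is a C⁴ function solving -λ f' = -f⁗ + f(1-f) on ℝ, with f(y) → 1 as y → -∞, f(y) → 0 as y → +∞, all derivatives f', f'', f''' tending to 0 at ±∞, f' ∈ L²(ℝ), and ∫(f')² > 0, then λ ∫_ℝ (f')² dy = 1/6; in particular λ > 0. -/
/-!
Multiplying the equation by `f'` turns every term except `λ (f')²` into an exact derivative:
`f' (f⁗ - f (1 - f))` is the derivative of `f''' f' - (f'')² / 2 - f² / 2 + f³ / 3`.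
Integrating over `ℝ`, the identity `λ ∫ (f')² = 1/6` is the jump of this first integral
between its limits `-1/6` at `-∞` and `0` at `+∞`.
-/

open Filter MeasureTheory Topology

theorem ContDiff.hasDerivAt_iteratedDeriv {𝕜 F : Type*} [NontriviallyNormedField 𝕜]
    [NormedAddCommGroup F] [NormedSpace 𝕜 F] {f : 𝕜 → F} {n : WithTop ℕ∞} (hf : ContDiff 𝕜 n f)
    {m : ℕ} (hm : m < n) (x : 𝕜) :
    HasDerivAt (iteratedDeriv m f) (iteratedDeriv (m + 1) f x) x := by
  rw [iteratedDeriv_succ]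
  exact (hf.differentiable_iteratedDeriv m hm x).hasDerivAt

noncomputable def travellingWaveEnergy (f : ℝ → ℝ) (y : ℝ) : ℝ :=
  iteratedDeriv 3 f y * deriv f y - iteratedDeriv 2 f y ^ 2 / 2 - f y ^ 2 / 2 + f y ^ 3 / 3

theorem hasDerivAt_travellingWaveEnergy {f : ℝ → ℝ} (hf : ContDiff ℝ 4 f) (y : ℝ) :
    HasDerivAt (travellingWaveEnergy f)
      (deriv f y * (iteratedDeriv 4 f y - f y * (1 - f y))) y := by
  have h0 : HasDerivAt f (deriv f y) y := by
    simpa using hf.hasDerivAt_iteratedDeriv (m := 0) (by norm_num) y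
  have h1 : HasDerivAt (deriv f) (iteratedDeriv 2 f y) y := by
    simpa using hf.hasDerivAt_iteratedDeriv (m := 1) (by norm_num) y
  have h2 := hf.hasDerivAt_iteratedDeriv (m := 2) (by norm_num) y
  have h3 := hf.hasDerivAt_iteratedDeriv (m := 3) (by norm_num) y
  exact ((((h3.mul h1).sub ((h2.pow 2).div_const 2)).sub ((h0.pow 2).div_const 2)).add
    ((h0.pow 3).div_const 3)).congr_deriv (by push_cast; ring)

theorem tendsto_travellingWaveEnergy {f : ℝ → ℝ} {l : Filter ℝ} {a : ℝ}
    (h0 : Tendsto f l (𝓝 a)) (h1 : Tendsto (deriv f) l (𝓝 0))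
    (h2 : Tendsto (iteratedDeriv 2 f) l (𝓝 0)) (h3 : Tendsto (iteratedDeriv 3 f) l (𝓝 0)) :
    Tendsto (travellingWaveEnergy f) l (𝓝 (a ^ 3 / 3 - a ^ 2 / 2)) := by
  have h := (((h3.mul h1).sub ((h2.pow 2).div_const 2)).sub ((h0.pow 2).div_const 2)).add
    ((h0.pow 3).div_const 3)
  rwa [show (0 : ℝ) * 0 - 0 ^ 2 / 2 - a ^ 2 / 2 + a ^ 3 / 3 = a ^ 3 / 3 - a ^ 2 / 2 by ring] at h

theorem biharmonic_TW_energy_identity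
    (f : ℝ → ℝ) (l : ℝ)
    (hf : ContDiff ℝ 4 f)
    (hODE : ∀ y : ℝ, -l * deriv f y = -(iteratedDeriv 4 f y) + f y * (1 - f y))
    (hlim1 : Tendsto f atBot (nhds 1))
    (hlim0 : Tendsto f atTop (nhds 0))
    (hd1top : Tendsto (deriv f) atTop (nhds 0))
    (hd1bot : Tendsto (deriv f) atBot (nhds 0))
    (hd2top : Tendsto (iteratedDeriv 2 f) atTop (nhds 0))
    (hd2bot : Tendsto (iteratedDeriv 2 f) atBot (nhds 0))
    (hd3top : Tendsto (iteratedDeriv 3 f) atTop (nhds 0))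
    (hd3bot : Tendsto (iteratedDeriv 3 f) atBot (nhds 0))
    (hL2 : Integrable (fun y : ℝ => (deriv f y)^2))
    (hpos : 0 < ∫ y : ℝ, (deriv f y)^2) :
    l * ∫ y : ℝ, (deriv f y)^2 = 1/6 ∧ 0 < l := by
  have hderiv : ∀ y, HasDerivAt (travellingWaveEnergy f) (l * deriv f y ^ 2) y := fun y =>
    (hasDerivAt_travellingWaveEnergy hf y).congr_deriv (by linear_combination deriv f y * hODE y)
  have hFTC := integral_of_hasDerivAt_of_tendsto hderiv (hL2.const_mul l)
    (tendsto_travellingWaveEnergy hlim1 hd1bot hd2bot hd3bot)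
    (tendsto_travellingWaveEnergy hlim0 hd1top hd2top hd3top)
  have hidentity : l * ∫ y : ℝ, (deriv f y)^2 = 1/6 := by
    rw [← integral_const_mul, hFTC]
    norm_num
  exact ⟨hidentity, pos_of_mul_pos_left (hidentity ▸ by norm_num) hpos.le⟩
end

section
/- If λ ∈ ℝ and the quartic μ⁴ - λμ - 1 factors as (μ - μ̄)²(μ² + aμ + b) with μ̄, a, b ∈ ℂ, then a = 2μ̄, b = -1/μ̄², 3μ̄² + 1/μ̄² = 0, and (3/2)λμ̄ = -2; consequently μ̄⁴ = -1/3 and λ² = 16/(9μ̄²), which forces λ ∉ ℝ, a contradiction — hence no such factorization exists for real λ. -/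
theorem quartic_no_factorization (l : ℝ) (μ a b : ℂ)
    (hfac : ∀ z : ℂ, z^4 - (l : ℂ) * z - 1 = (z - μ)^2 * (z^2 + a * z + b)) :
    a = 2 * μ ∧ b = -1 / μ^2 ∧ 3 * μ^2 + 1 / μ^2 = 0 ∧
    (3/2 : ℂ) * (l : ℂ) * μ = -2 ∧ μ^4 = -1/3 ∧ False := by
  have h0 := hfac 0
  have h1 := hfac 1
  have h2 := hfac (-1)
  have h3 := hfac 2
  have h4 := hfac (-2)
  -- coefficient equations
  have ha : a = 2 * μ := by
    linear_combination (-(1:ℂ)/12) * ((h3 - h4) - 2 * (h1 - h2))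
  have hc2 : μ^2 - 2*a*μ + b = 0 := by
    linear_combination (-(1:ℂ)/2) * (h1 + h2 - 2 * h0)
  have hc1 : a*μ^2 - 2*b*μ + (l:ℂ) = 0 := by
    linear_combination (-(1:ℂ)/12) * (8 * (h1 - h2) - (h3 - h4))
  have hc0 : b * μ^2 = -1 := by
    linear_combination -h0
  have hμ : μ ≠ 0 := by
    intro h
    rw [h] at hc0
    norm_num at hc0
  have hb3 : b = 3 * μ^2 := by linear_combination hc2 + 2*μ*ha
  have hb : b = -1 / μ^2 := by
    field_simp
    linear_combination hc0
  have h34 : 3 * μ^4 = -1 := by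
    linear_combination hc0 - μ^2*hb3
  have hsum : 3 * μ^2 + 1 / μ^2 = 0 := by
    field_simp
    linear_combination h34
  have hl : (l:ℂ) = 4 * μ^3 := by
    linear_combination hc1 - μ^2*ha + 2*μ*hb3
  have hlm : (3/2 : ℂ) * (l : ℂ) * μ = -2 := by
    linear_combination (3/2 : ℂ) * μ * hl + 2 * h34
  have hm4 : μ^4 = -1/3 := by linear_combination h34 / 3
  refine ⟨ha, hb, hsum, hlm, hm4, ?_⟩
  have hl4 : (l:ℂ)^4 = -256/27 := by
    rw [hl]
    linear_combination 256 * (μ^8 - μ^4/3 + 1/9) * hm4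
  have hr : (l^4 : ℝ) = -256/27 := by
    exact_mod_cast (by push_cast; exact hl4 : ((l^4 : ℝ) : ℂ) = ((-256/27 : ℝ) : ℂ))
  have hpos : (0:ℝ) ≤ l^4 := by positivity
  linarith
end
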